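/- Let T be a rooted binary tree whose root ρ has children y₁ and y₂ with edge substitution probabilities p₁ and p₂, and let Y₁, Y₂ be the leaf sets of the subtrees rooted at y₁, y₂, with X = Y₁ ∪ Y₂. With P_i = 1 − 2p_i, the Fitch probabilities satisfy the recursion P_{αβ}(X) = [((1+P₁)/2)·P_α(Y₁) + ((1−P₁)/2)·P_β(Y₁)]·[((1−P₂)/2)·P_α(Y₂) + ((1+P₂)/2)·P_β(Y₂)] + [((1−P₁)/2)·P_α(Y₁) + ((1+P₁)/2)·P_β(Y₁)]·[((1+P₂)/2)·P_α(Y₂) + ((1−P₂)/2)·P_β(Y₂)] + P_{αβ}(Y₁)·P_{αβ}(Y₂). -/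

import Mathlib

/-!
Model: rooted binary phylogenetic trees whose edges carry substitution
probabilities, evolving binary characters (states `true` = α, `false` = β)
under the two-state symmetric (Neyman) model, and Fitch's maximum parsimony
algorithm.
-/

/-- A rooted binary tree; an internal node records the substitution
probabilities on the edges to its two children. -/
inductive PTree where
  | leaf : PTree
  | node (p₁ p₂ : ℝ) (t₁ t₂ : PTree) : PTree

/-- The type of binary characters on a tree: an assignment of a state
(`true` = α, `false` = β) to each leaf. -/
def PTree.Char : PTree → Type
  | .leaf => Bool
  | .node _ _ t₁ t₂ => t₁.Char × t₂.Char

instance PTree.Char.instFintype : (t : PTree) → Fintype t.Char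
  | .leaf => inferInstanceAs (Fintype Bool)
  | .node _ _ t₁ t₂ =>
      letI := PTree.Char.instFintype t₁
      letI := PTree.Char.instFintype t₂
      inferInstanceAs (Fintype (_ × _))

instance PTree.Char.instDecidableEq : (t : PTree) → DecidableEq t.Char
  | .leaf => inferInstanceAs (DecidableEq Bool)
  | .node _ _ t₁ t₂ =>
      letI := PTree.Char.instDecidableEq t₁
      letI := PTree.Char.instDecidableEq t₂
      inferInstanceAs (DecidableEq (_ × _))

/-- Single-edge transition probability of the two-state symmetric model:
conditional on the parent being in state `s`, the child is in state `s'`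
with probability `1 - p` if `s' = s` and `p` otherwise. -/
def transProb (p : ℝ) (s s' : Bool) : ℝ := if s' = s then 1 - p else p

/-- `t.charProb s c` is the probability that the character `c` is generated
at the leaves of `t` conditional on the root of `t` being in state `s`
(substitutions happen independently across edges). -/
def PTree.charProb : (t : PTree) → Bool → t.Char → ℝ
  | .leaf, s, c => @ite ℝ (c = s) (instDecidableEqBool c s) 1 0
  | .node p₁ p₂ t₁ t₂, s, c =>
      (∑ s₁ : Bool, transProb p₁ s s₁ * t₁.charProb s₁ c.1) *
      (∑ s₂ : Bool, transProb p₂ s s₂ * t₂.charProb s₂ c.2)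

/-- The state set assigned to the root by Fitch's maximum parsimony
algorithm: a leaf in state `s` gets `{s}`; an internal node gets the
intersection of the children's state sets if nonempty, else their union. -/
def PTree.fitch : (t : PTree) → t.Char → Finset Bool
  | .leaf, c => {c}
  | .node _ _ t₁ t₂, c =>
      if (t₁.fitch c.1 ∩ t₂.fitch c.2).Nonempty then t₁.fitch c.1 ∩ t₂.fitch c.2
      else t₁.fitch c.1 ∪ t₂.fitch c.2

/-- `P_α`: probability, conditional on the root being in state α, that MP
returns the state set `{α}`. -/
noncomputable def PTree.probAlpha (t : PTree) : ℝ :=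
  ∑ c : t.Char, if t.fitch c = {true} then t.charProb true c else 0

/-- `P_β`: probability, conditional on the root being in state α, that MP
returns the state set `{β}`. -/
noncomputable def PTree.probBeta (t : PTree) : ℝ :=
  ∑ c : t.Char, if t.fitch c = {false} then t.charProb true c else 0

/-- `P_{αβ}`: probability, conditional on the root being in state α, that MP
returns the state set `{α, β}`. -/
noncomputable def PTree.probBoth (t : PTree) : ℝ :=
  ∑ c : t.Char, if t.fitch c = ({true, false} : Finset Bool) then t.charProb true c else 0

/-- The reconstruction accuracy `RA = UA + AA/2` of maximum parsimony on all
leaves of `t`, the conditioning root state being the root of `t` itself. -/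
noncomputable def PTree.RA (t : PTree) : ℝ := t.probAlpha + t.probBoth / 2

/-- Probability of the character `c` on `t` conditional on the state `s` of an
ancestor vertex joined to the root of `t` by an edge of substitution
probability `p`. -/
noncomputable def PTree.charProbVia (t : PTree) (p : ℝ) (s : Bool) (c : t.Char) : ℝ :=
  ∑ s' : Bool, transProb p s s' * t.charProb s' c

/-- Reconstruction accuracy of MP applied to the subtree `t` (rooted at `y`),
where the ancestral state being estimated is that of a vertex `ρ` joined to
`y` by an edge of substitution probability `p`:
`RA = P(MP = {α} | ρ = α) + (1/2)·P(MP = {α,β} | ρ = α)`. -/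
noncomputable def PTree.RAVia (t : PTree) (p : ℝ) : ℝ :=
  (∑ c : t.Char, if t.fitch c = {true} then t.charProbVia p true c else 0) +
  (∑ c : t.Char, if t.fitch c = ({true, false} : Finset Bool) then t.charProbVia p true c else 0) / 2

/-- All edge substitution probabilities lie in `[0, 1/2]`. -/
def PTree.valid : PTree → Prop
  | .leaf => True
  | .node p₁ p₂ t₁ t₂ => 0 ≤ p₁ ∧ p₁ ≤ 1/2 ∧ 0 ≤ p₂ ∧ p₂ ≤ 1/2 ∧ t₁.valid ∧ t₂.valid

/-- The list of net substitution probabilities from the root to each leaf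
(obtained by chaining the single-edge substitution probabilities). -/
def PTree.leafFlipProbs : PTree → List ℝ
  | .leaf => [0]
  | .node p₁ p₂ t₁ t₂ =>
      (t₁.leafFlipProbs.map fun r => (1 - p₁) * r + p₁ * (1 - r)) ++
      (t₂.leafFlipProbs.map fun r => (1 - p₂) * r + p₂ * (1 - r))

/-- The balanced binary tree of depth `n` with substitution probability `q`
on every edge. -/
def balanced (q : ℝ) : ℕ → PTree
  | 0 => .leaf
  | n + 1 => .node q q (balanced q n) (balanced q n)

/-- `P_α(n,q)` for the balanced tree of depth `n`. -/
noncomputable def Palpha (n : ℕ) (q : ℝ) : ℝ := (balanced q n).probAlpha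

/-- `P_β(n,q)` for the balanced tree of depth `n`. -/
noncomputable def Pbeta (n : ℕ) (q : ℝ) : ℝ := (balanced q n).probBeta

/-- `P_{αβ}(n,q)` for the balanced tree of depth `n`. -/
noncomputable def Palphabeta (n : ℕ) (q : ℝ) : ℝ := (balanced q n).probBoth

/-!
Conditional on the root state, the two root subtrees evolve independently, each
through its own root edge, so the probability of a pair of characters factors.
Fitch's algorithm returns `{α, β}` at the root exactly when the two subtrees return
`{α}` and `{β}` in some order, or both return `{α, β}`; hence `P_{αβ}(X)` is a sum of
three products of subtree probabilities seen through the root edges. Through an edge of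
substitution probability `p` such a probability is `(1 - p)` times the one conditioned on
`α` plus `p` times the one conditioned on `β`, and the symmetry `α ↔ β` of the model
turns probabilities conditioned on `β` into those conditioned on `α` with the state sets
swapped.
-/

namespace PTree

noncomputable def fitchProb (t : PTree) (s : Bool) (S : Finset Bool) : ℝ :=
  ∑ c : t.Char, if t.fitch c = S then t.charProb s c else 0

noncomputable def fitchProbVia (t : PTree) (p : ℝ) (s : Bool) (S : Finset Bool) : ℝ :=
  ∑ c : t.Char, if t.fitch c = S then t.charProbVia p s c else 0

def flip : (t : PTree) → t.Char → t.Char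
  | .leaf, c => !c
  | .node _ _ t₁ t₂, c => (t₁.flip c.1, t₂.flip c.2)

theorem flip_involutive : (t : PTree) → Function.Involutive t.flip
  | .leaf, c => Bool.not_not c
  | .node _ _ t₁ t₂, c => Prod.ext (t₁.flip_involutive c.1) (t₂.flip_involutive c.2)

theorem charProb_flip : (t : PTree) → ∀ s c, t.charProb s (t.flip c) = t.charProb (!s) c
  | .leaf, s, c => by cases s <;> cases c <;> rfl
  | .node p₁ p₂ t₁ t₂, s, c => by
      simp only [charProb, flip, Fintype.sum_bool, t₁.charProb_flip, t₂.charProb_flip]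
      cases s <;> simp [transProb, add_comm]

theorem fitch_flip : (t : PTree) → ∀ c, t.fitch (t.flip c) = (t.fitch c).image not
  | .leaf, c => by cases c <;> rfl
  | .node _ _ t₁ t₂, c => by
      simp only [fitch, flip, t₁.fitch_flip, t₂.fitch_flip,
        ← Finset.image_inter _ _ Bool.not_injective, ← Finset.image_union,
        Finset.image_nonempty]
      split_ifs <;> rfl

theorem fitchProb_not (t : PTree) (s : Bool) (S : Finset Bool) :
    t.fitchProb (!s) S = t.fitchProb s (S.image not) := by
  rw [fitchProb, fitchProb, ← t.flip_involutive.bijective.sum_comp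
    (fun c => if t.fitch c = S.image not then t.charProb s c else 0)]
  refine Fintype.sum_congr _ _ fun c => ?_
  simp only [t.fitch_flip, t.charProb_flip, (Finset.image_injective Bool.not_injective).eq_iff]

theorem fitchProbVia_eq (t : PTree) (p : ℝ) (s : Bool) (S : Finset Bool) :
    t.fitchProbVia p s S = (1 - p) * t.fitchProb s S + p * t.fitchProb (!s) S := by
  simp only [fitchProbVia, fitchProb, charProbVia, Finset.mul_sum, ← Finset.sum_add_distrib]
  refine Fintype.sum_congr _ _ fun c => ?_
  split_ifs
  · cases s <;> simp [transProb, add_comm]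
  · simp

theorem fitch_nonempty : (t : PTree) → ∀ c, (t.fitch c).Nonempty
  | .leaf, c => Finset.singleton_nonempty c
  | .node _ _ t₁ t₂, c => by
      rw [fitch]
      split_ifs with h
      · exact h
      · exact (t₁.fitch_nonempty c.1).mono Finset.subset_union_left

theorem fitch_cases (t : PTree) (c : t.Char) :
    t.fitch c = {true} ∨ t.fitch c = {false} ∨ t.fitch c = {true, false} := by
  have nonempty_cases :
      ∀ S : Finset Bool, S.Nonempty → S = {true} ∨ S = {false} ∨ S = {true, false} := by
    decide
  exact nonempty_cases _ (t.fitch_nonempty c)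

theorem fitchProb_node_both (p₁ p₂ : ℝ) (t₁ t₂ : PTree) (s : Bool) :
    (node p₁ p₂ t₁ t₂).fitchProb s {true, false} =
      t₁.fitchProbVia p₁ s {true} * t₂.fitchProbVia p₂ s {false}
      + t₁.fitchProbVia p₁ s {false} * t₂.fitchProbVia p₂ s {true}
      + t₁.fitchProbVia p₁ s {true, false} * t₂.fitchProbVia p₂ s {true, false} := by
  simp only [fitchProbVia, Fintype.sum_mul_sum, ← Finset.sum_add_distrib]
  refine (Fintype.sum_prod_type _).trans
    (Fintype.sum_congr _ _ fun c₁ => Fintype.sum_congr _ _ fun c₂ => ?_)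
  rcases t₁.fitch_cases c₁ with h₁ | h₁ | h₁ <;> rcases t₂.fitch_cases c₂ with h₂ | h₂ | h₂ <;>
    simp +decide [fitch, h₁, h₂, charProb, charProbVia]

theorem probAlpha_eq_fitchProb (t : PTree) : t.probAlpha = t.fitchProb true {true} := rfl

theorem probBeta_eq_fitchProb (t : PTree) : t.probBeta = t.fitchProb true {false} := rfl

theorem probBoth_eq_fitchProb (t : PTree) : t.probBoth = t.fitchProb true {true, false} := rfl

end PTree

theorem stmt10_general (p₁ p₂ : ℝ) (t₁ t₂ : PTree) :
    (PTree.node p₁ p₂ t₁ t₂).probBoth =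
      ((1 + (1 - 2*p₁))/2 * t₁.probAlpha + (1 - (1 - 2*p₁))/2 * t₁.probBeta) *
        ((1 - (1 - 2*p₂))/2 * t₂.probAlpha + (1 + (1 - 2*p₂))/2 * t₂.probBeta)
      + ((1 - (1 - 2*p₁))/2 * t₁.probAlpha + (1 + (1 - 2*p₁))/2 * t₁.probBeta) *
        ((1 + (1 - 2*p₂))/2 * t₂.probAlpha + (1 - (1 - 2*p₂))/2 * t₂.probBeta)
      + t₁.probBoth * t₂.probBoth := by
  have condition_on_true (t : PTree) (S : Finset Bool) :
      t.fitchProb false S = t.fitchProb true (S.image not) :=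
    t.fitchProb_not true S
  have swap_pair : ({true, false} : Finset Bool).image not = {true, false} := by decide
  simp only [PTree.probAlpha_eq_fitchProb, PTree.probBeta_eq_fitchProb,
    PTree.probBoth_eq_fitchProb, PTree.fitchProb_node_both, PTree.fitchProbVia_eq,
    condition_on_true, swap_pair, Finset.image_singleton, Bool.not_true, Bool.not_false]
  ring

/-- recursion for `P_{αβ}` at the root in terms of the two root
subtrees, where the root is joined to the subtree roots by edges of
substitution probabilities `p₁`, `p₂` and `P_i = 1 − 2p_i`. -/
theorem stmt10 (p₁ p₂ : ℝ) (t₁ t₂ : PTree)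
    (h₁ : 0 ≤ p₁ ∧ p₁ ≤ 1/2) (h₂ : 0 ≤ p₂ ∧ p₂ ≤ 1/2)
    (hv₁ : t₁.valid) (hv₂ : t₂.valid) :
    (PTree.node p₁ p₂ t₁ t₂).probBoth =
      ((1 + (1 - 2*p₁))/2 * t₁.probAlpha + (1 - (1 - 2*p₁))/2 * t₁.probBeta) *
        ((1 - (1 - 2*p₂))/2 * t₂.probAlpha + (1 + (1 - 2*p₂))/2 * t₂.probBeta)
      + ((1 - (1 - 2*p₁))/2 * t₁.probAlpha + (1 + (1 - 2*p₁))/2 * t₁.probBeta) *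
        ((1 + (1 - 2*p₂))/2 * t₂.probAlpha + (1 - (1 - 2*p₂))/2 * t₂.probBeta)
      + t₁.probBoth * t₂.probBoth :=
  stmt10_general p₁ p₂ t₁ t₂
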